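/- There are absolute constants c, C > 0 such that for all α, β ∈ T², c · d_{T²}(α∧β) ≤ (M(∂S(α)) M(∂S(β)))^{−1} ∫_{∂S(α)} ∫_{∂S(β)} d_{T²}(ξ∧ω) dM(ξ) dM(ω) ≤ C · d_{T²}(α∧β). -/

import Mathlib

open MeasureTheory ENNReal Real Filter
open scoped NNReal Classical

noncomputable section



/-- Vertices of the dyadic tree: finite binary strings. -/
abbrev V : Type := List Bool

/-- The boundary `∂T`: infinite binary sequences. -/
abbrev Bd : Type := ℕ → Bool

/-- Vertices of the bitree. -/
abbrev V2 : Type := V × V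

/-- `β ∈ T` is a prefix of the boundary point `ω ∈ ∂T`. -/
def bdle (ω : Bd) (β : V) : Prop := ∀ i : Fin β.length, ω i.1 = β.get i

/-- The cylinder `∂S(β) = {ω ∈ ∂T : ω ≤ β}`. -/
def cylB (β : V) : Set Bd := {ω | bdle ω β}

/-- `∂S(β) ⊆ (∂T)²` for `β ∈ T²`. -/
def cylB2 (β : V2) : Set (Bd × Bd) := cylB β.1 ×ˢ cylB β.2

/-- `d(x ∧ y)` for boundary points: the number of common ancestors, computed as the
number of `n` such that `x` and `y` agree on their first `n` letters (so it is `∞`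
when `x = y`). -/
def dB (x y : Bd) : ℝ≥0∞ := ∑' n : ℕ, if ∀ i < n, x i = y i then 1 else 0

/-- `d_{T²}(ξ ∧ ω) = d(ξ₁ ∧ ω₁) · d(ξ₂ ∧ ω₂)` for boundary points of the bitree. -/
def dB2 (ξ ω : Bd × Bd) : ℝ≥0∞ := dB ξ.1 ω.1 * dB ξ.2 ω.2

/-- `d(α ∧ β)` for vertices: the number of common prefixes of `α` and `β`. -/
def dVV (a b : V) : ℝ≥0∞ :=
  ∑' n : ℕ, if n ≤ a.length ∧ n ≤ b.length ∧ a.take n = b.take n then 1 else 0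

/-- `d_{T²}(α ∧ β)` for vertices of the bitree. -/
def dVV2 (α β : V2) : ℝ≥0∞ := dVV α.1 β.1 * dVV α.2 β.2

/-!
For `x ∈ ∂S(a)` and `y ∈ ∂S(b)` write `d(x ∧ y) = ∑ₙ 1[x and y share their first n letters]`.
The terms with `n ≤ min |a| |b|` do not depend on `x, y` and add up to `d(a ∧ b)`. A term with
`n > min |a| |b|` has mass at most `2⁻ⁿ` times the mass of the smaller of the two cylinders, so
after normalisation these terms add up to at most `1 ≤ d(a ∧ b)`. Hence the mean of `d(x ∧ y)`
over `∂S(a) × ∂S(b)` lies between `d(a ∧ b)` and `2 d(a ∧ b)`; the mean of `d_{T²}` is the product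
of two such means, which gives `c = 1` and `C = 4`.
-/

def agreeSet (n : ℕ) : Set (Bd × Bd) := {p | ∀ i < n, p.1 i = p.2 i}

theorem measurableSet_agreeSet (n : ℕ) : MeasurableSet (agreeSet n) := by
  simp only [agreeSet, Set.ofPred_forall]
  exact .iInter fun i => .iInter fun _ => measurableSet_eq_fun (by fun_prop) (by fun_prop)

theorem preimage_swap_agreeSet (n : ℕ) : Prod.swap ⁻¹' agreeSet n = agreeSet n := by
  ext p
  exact forall₂_congr fun _ _ => eq_comm

theorem dB_eq_tsum_indicator (x y : Bd) : dB x y = ∑' n, (agreeSet n).indicator 1 (x, y) := by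
  simp only [dB, Set.indicator_apply, agreeSet, Set.mem_ofPred_eq, Pi.one_apply]

theorem measurable_dB : Measurable fun p : Bd × Bd => dB p.1 p.2 := by
  simp only [dB_eq_tsum_indicator]
  exact .tsum fun n => measurable_one.indicator (measurableSet_agreeSet n)

theorem take_eq_ofFn_of_mem_cylB {x : Bd} {a : V} (hx : x ∈ cylB a) {n : ℕ} (hn : n ≤ a.length) :
    a.take n = List.ofFn fun i : Fin n => x i := by
  refine List.ext_getElem (by simpa using hn) fun i hi _ => ?_
  simp only [List.getElem_take, List.getElem_ofFn]
  exact (hx ⟨i, by simp at hi; omega⟩).symm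

theorem mem_agreeSet_iff_take_eq {x y : Bd} {a b : V} (hx : x ∈ cylB a) (hy : y ∈ cylB b) {n : ℕ}
    (ha : n ≤ a.length) (hb : n ≤ b.length) : (x, y) ∈ agreeSet n ↔ a.take n = b.take n := by
  rw [take_eq_ofFn_of_mem_cylB hx ha, take_eq_ofFn_of_mem_cylB hy hb, List.ofFn_inj, funext_iff,
    Fin.forall_iff]
  rfl

theorem cylB_prod_inter_agreeSet {a b : V} {n : ℕ} (ha : n ≤ a.length) (hb : n ≤ b.length) :
    cylB a ×ˢ cylB b ∩ agreeSet n = if a.take n = b.take n then cylB a ×ˢ cylB b else ∅ := by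
  ext ⟨x, y⟩
  split_ifs with h
  · simp only [Set.mem_inter_iff, Set.mem_prod, and_iff_left_iff_imp]
    exact fun ⟨hx, hy⟩ => (mem_agreeSet_iff_take_eq hx hy ha hb).2 h
  · simp only [Set.mem_inter_iff, Set.mem_prod, Set.mem_empty_iff_false, iff_false]
    exact fun ⟨⟨hx, hy⟩, hxy⟩ => h ((mem_agreeSet_iff_take_eq hx hy ha hb).1 hxy)

theorem one_le_dVV (a b : V) : 1 ≤ dVV a b :=
  le_of_eq_of_le (by simp) (ENNReal.le_tsum 0)

theorem cylB_ofFn (x : Bd) (n : ℕ) :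
    cylB (List.ofFn fun i : Fin n => x i) = PiNat.cylinder x n := by
  ext y
  simp [cylB, bdle, PiNat.cylinder, Fin.forall_iff]

theorem cylB_eq_cylinder (a : V) : cylB a = PiNat.cylinder (fun i => a.getD i false) a.length := by
  ext y
  simp only [cylB, bdle, PiNat.cylinder, Fin.forall_iff, Set.mem_ofPred_eq, List.get_eq_getElem]
  exact forall₂_congr fun i hi => by rw [List.getD_eq_getElem _ _ hi]

theorem measurableSet_cylB (a : V) : MeasurableSet (cylB a) := by
  rw [cylB_eq_cylinder]
  exact (PiNat.isOpen_cylinder _ _ _).measurableSet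

theorem tsum_ite_lt_inv_two_pow (s : ℕ) :
    ∑' n : ℕ, (if s < n then (2⁻¹ : ℝ≥0∞) ^ n else 0) = 2⁻¹ ^ s := by
  rw [← ENNReal.summable.sum_add_tsum_nat_add' (k := s + 1),
    Finset.sum_eq_zero fun n hn => if_neg (by simp at hn; omega), zero_add]
  have h : ∀ k : ℕ, (if s < k + (s + 1) then (2⁻¹ : ℝ≥0∞) ^ (k + (s + 1)) else 0) =
      2⁻¹ ^ s * 2⁻¹ ^ (k + 1) := fun k => by rw [if_pos (by omega), ← pow_add]; ring_nf
  rw [tsum_congr h, ENNReal.tsum_mul_left, ENNReal.tsum_geometric_add_one, ENNReal.one_sub_inv_two,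
    inv_inv, ENNReal.inv_mul_cancel two_ne_zero ENNReal.ofNat_ne_top, mul_one]

theorem setLIntegral_setLIntegral_prod_mul {α β : Type*} [MeasurableSpace α] [MeasurableSpace β]
    {μ : Measure α} {ν : Measure β} [SFinite μ] [SFinite ν] {f : α → α → ℝ≥0∞}
    {g : β → β → ℝ≥0∞} (hf : Measurable (Function.uncurry f))
    (hg : Measurable (Function.uncurry g)) (A₁ B₁ : Set α) (A₂ B₂ : Set β) :
    ∫⁻ ξ in A₁ ×ˢ A₂, ∫⁻ ω in B₁ ×ˢ B₂, f ξ.1 ω.1 * g ξ.2 ω.2 ∂μ.prod ν ∂μ.prod ν =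
      (∫⁻ x in A₁, ∫⁻ y in B₁, f x y ∂μ ∂μ) * ∫⁻ x in A₂, ∫⁻ y in B₂, g x y ∂ν ∂ν := by
  have inner (ξ : α × β) : ∫⁻ ω in B₁ ×ˢ B₂, f ξ.1 ω.1 * g ξ.2 ω.2 ∂μ.prod ν =
      (∫⁻ y in B₁, f ξ.1 y ∂μ) * ∫⁻ y in B₂, g ξ.2 y ∂ν := by
    rw [← Measure.prod_restrict]
    exact lintegral_prod_mul (hf.comp measurable_prodMk_left).aemeasurable
      (hg.comp measurable_prodMk_left).aemeasurable
  simp_rw [inner]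
  rw [← Measure.prod_restrict]
  exact lintegral_prod_mul hf.lintegral_prod_right'.aemeasurable
    hg.lintegral_prod_right'.aemeasurable

theorem lintegral_dB_eq_tsum (ρ : Measure (Bd × Bd)) (S : Set (Bd × Bd)) :
    ∫⁻ p in S, dB p.1 p.2 ∂ρ = ∑' n, ρ (S ∩ agreeSet n) := by
  simp_rw [dB_eq_tsum_indicator]
  rw [lintegral_tsum fun n => (measurable_one.indicator (measurableSet_agreeSet n)).aemeasurable]
  refine tsum_congr fun n => ?_
  rw [lintegral_indicator_one (measurableSet_agreeSet n),
    Measure.restrict_apply (measurableSet_agreeSet n), Set.inter_comm]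

theorem dVV_mul_le_lintegral_dB (ρ : Measure (Bd × Bd)) (a b : V) :
    dVV a b * ρ (cylB a ×ˢ cylB b) ≤ ∫⁻ p in cylB a ×ˢ cylB b, dB p.1 p.2 ∂ρ := by
  rw [lintegral_dB_eq_tsum, dVV, ← ENNReal.tsum_mul_right]
  refine ENNReal.tsum_le_tsum fun n => ?_
  split_ifs with h
  · rw [one_mul, cylB_prod_inter_agreeSet h.1 h.2.1, if_pos h.2.2]
  · rw [zero_mul]
    exact zero_le

def meanMeet (μ : Measure Bd) (a b : V) : ℝ≥0∞ :=
  (μ (cylB a) * μ (cylB b))⁻¹ * ∫⁻ x in cylB a, ∫⁻ y in cylB b, dB x y ∂μ ∂μ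

section CoinFlip

variable {μ ν : Measure Bd}

theorem measure_cylinder_of_measure_cylB
    (hμ : ∀ β : V, μ (cylB β) = (2 : ℝ≥0∞) ^ (-(β.length : ℤ))) (x : Bd) (n : ℕ) :
    μ (PiNat.cylinder x n) = 2⁻¹ ^ n := by
  rw [← cylB_ofFn, hμ, List.length_ofFn, ENNReal.zpow_neg, zpow_natCast, ENNReal.inv_pow]

theorem measure_cylB (hμ : ∀ x n, μ (PiNat.cylinder x n) = 2⁻¹ ^ n) (a : V) :
    μ (cylB a) = 2⁻¹ ^ a.length := by
  rw [cylB_eq_cylinder, hμ]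

theorem measure_prod_inter_agreeSet_le_left [SFinite ν]
    {n : ℕ} (hν : ∀ x, ν (PiNat.cylinder x n) = 2⁻¹ ^ n) {A B : Set Bd}
    (hA : MeasurableSet A) (hB : MeasurableSet B) :
    (μ.prod ν) (A ×ˢ B ∩ agreeSet n) ≤ μ A * 2⁻¹ ^ n := by
  rw [Measure.prod_apply ((hA.prod hB).inter (measurableSet_agreeSet n)), mul_comm,
    ← lintegral_indicator_const hA]
  refine lintegral_mono fun x => ?_
  by_cases hx : x ∈ A
  · rw [Set.indicator_of_mem hx, ← hν x]
    exact measure_mono fun y hy i hi => (hy.2 i hi).symm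
  · rw [Set.indicator_of_notMem hx]
    exact (measure_mono_null (fun y (hy : (x, y) ∈ A ×ˢ B ∩ agreeSet n) => hx hy.1.1)
      measure_empty).le

theorem measure_prod_inter_agreeSet_le_right [SFinite μ] [SFinite ν]
    {n : ℕ} (hμ : ∀ x, μ (PiNat.cylinder x n) = 2⁻¹ ^ n) {A B : Set Bd}
    (hA : MeasurableSet A) (hB : MeasurableSet B) :
    (μ.prod ν) (A ×ˢ B ∩ agreeSet n) ≤ ν B * 2⁻¹ ^ n := by
  rw [← Measure.prod_swap, Measure.map_apply measurable_swap
    ((hA.prod hB).inter (measurableSet_agreeSet n)), Set.preimage_inter, Set.preimage_swap_prod,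
    preimage_swap_agreeSet]
  exact measure_prod_inter_agreeSet_le_left hμ hB hA

theorem measure_cylB_prod_inter_agreeSet_le [SFinite μ]
    (hμ : ∀ x n, μ (PiNat.cylinder x n) = 2⁻¹ ^ n) (a b : V) (n : ℕ) :
    (μ.prod μ) (cylB a ×ˢ cylB b ∩ agreeSet n) ≤ 2⁻¹ ^ max a.length b.length * 2⁻¹ ^ n := by
  have ha := measurableSet_cylB a
  have hb := measurableSet_cylB b
  rcases le_total a.length b.length with h | h
  · rw [max_eq_right h, ← measure_cylB hμ]
    exact measure_prod_inter_agreeSet_le_right (hμ · n) ha hb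
  · rw [max_eq_left h, ← measure_cylB hμ]
    exact measure_prod_inter_agreeSet_le_left (hμ · n) ha hb

theorem lintegral_dB_le [SFinite μ] (hμ : ∀ x n, μ (PiNat.cylinder x n) = 2⁻¹ ^ n) (a b : V) :
    ∫⁻ p in cylB a ×ˢ cylB b, dB p.1 p.2 ∂μ.prod μ ≤
      (dVV a b + 1) * (μ.prod μ) (cylB a ×ˢ cylB b) := by
  set s := min a.length b.length
  have hP : (μ.prod μ) (cylB a ×ˢ cylB b) = 2⁻¹ ^ max a.length b.length * 2⁻¹ ^ s := by
    rw [Measure.prod_prod, measure_cylB hμ, measure_cylB hμ, ← pow_add, ← pow_add, max_add_min]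
  set P := (μ.prod μ) (cylB a ×ˢ cylB b)
  have hterm : ∀ n, (μ.prod μ) (cylB a ×ˢ cylB b ∩ agreeSet n) ≤
      (if n ≤ a.length ∧ n ≤ b.length ∧ a.take n = b.take n then 1 else 0) * P +
        2⁻¹ ^ max a.length b.length * if s < n then 2⁻¹ ^ n else 0 := by
    intro n
    rcases le_or_gt n s with hn | hn
    · have ha : n ≤ a.length := hn.trans (min_le_left _ _)
      have hb : n ≤ b.length := hn.trans (min_le_right _ _)
      rw [cylB_prod_inter_agreeSet ha hb, if_neg hn.not_gt, mul_zero, add_zero]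
      by_cases h : a.take n = b.take n
      · rw [if_pos h, if_pos ⟨ha, hb, h⟩, one_mul]
      · rw [if_neg h, measure_empty]
        exact zero_le
    · rw [if_neg (by omega), if_pos hn, zero_mul, zero_add]
      exact measure_cylB_prod_inter_agreeSet_le hμ a b n
  calc ∫⁻ p in cylB a ×ˢ cylB b, dB p.1 p.2 ∂μ.prod μ
      ≤ ∑' n, ((if n ≤ a.length ∧ n ≤ b.length ∧ a.take n = b.take n then 1 else 0) * P +
        2⁻¹ ^ max a.length b.length * if s < n then 2⁻¹ ^ n else 0) :=
        (lintegral_dB_eq_tsum _ _).trans_le (ENNReal.tsum_le_tsum hterm)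
    _ = dVV a b * P + P := by
      rw [ENNReal.tsum_add, ENNReal.tsum_mul_right, ENNReal.tsum_mul_left, tsum_ite_lt_inv_two_pow,
        ← hP, dVV]
    _ = (dVV a b + 1) * P := by ring

theorem measure_cylB_prod_ne_zero [SFinite μ] (hμ : ∀ x n, μ (PiNat.cylinder x n) = 2⁻¹ ^ n)
    (a b : V) : (μ.prod μ) (cylB a ×ˢ cylB b) ≠ 0 := by
  rw [Measure.prod_prod, measure_cylB hμ, measure_cylB hμ]
  simp

theorem meanMeet_eq_div [SFinite μ] (a b : V) :
    meanMeet μ a b = (∫⁻ p in cylB a ×ˢ cylB b, dB p.1 p.2 ∂μ.prod μ) /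
      (μ.prod μ) (cylB a ×ˢ cylB b) := by
  rw [meanMeet, ENNReal.div_eq_inv_mul, Measure.prod_prod,
    setLIntegral_prod (fun p : Bd × Bd => dB p.1 p.2) measurable_dB.aemeasurable]

theorem dVV_le_meanMeet [IsFiniteMeasure μ] (hμ : ∀ x n, μ (PiNat.cylinder x n) = 2⁻¹ ^ n)
    (a b : V) : dVV a b ≤ meanMeet μ a b := by
  rw [meanMeet_eq_div, ENNReal.le_div_iff_mul_le (.inl (measure_cylB_prod_ne_zero hμ a b))
    (.inl (measure_ne_top _ _))]
  exact dVV_mul_le_lintegral_dB _ a b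

theorem meanMeet_le_two_mul_dVV [IsFiniteMeasure μ]
    (hμ : ∀ x n, μ (PiNat.cylinder x n) = 2⁻¹ ^ n) (a b : V) : meanMeet μ a b ≤ 2 * dVV a b := by
  rw [meanMeet_eq_div, ENNReal.div_le_iff (measure_cylB_prod_ne_zero hμ a b) (measure_ne_top _ _)]
  refine (lintegral_dB_le hμ a b).trans (mul_le_mul_left ?_ _)
  rw [two_mul]
  exact add_le_add_right (one_le_dVV a b) _

theorem average_dB2_eq_meanMeet_mul_meanMeet [IsFiniteMeasure μ] (α β : V2) :
    ((μ.prod μ) (cylB2 α) * (μ.prod μ) (cylB2 β))⁻¹ *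
        ∫⁻ ξ in cylB2 α, ∫⁻ ω in cylB2 β, dB2 ξ ω ∂(μ.prod μ) ∂(μ.prod μ) =
      meanMeet μ α.1 β.1 * meanMeet μ α.2 β.2 := by
  simp only [cylB2, dB2, meanMeet, Measure.prod_prod]
  rw [setLIntegral_setLIntegral_prod_mul (f := dB) (g := dB) measurable_dB measurable_dB]
  repeat rw [ENNReal.mul_inv (.inr (by finiteness)) (.inl (by finiteness))]
  ring

end CoinFlip

/-- `d_{T²}` is almost a martingale with respect to the coin-flipping measure
`M = M₀ × M₀`: the average of `d_{T²}(ξ ∧ ω)` over `ξ ∈ ∂S(α)`, `ω ∈ ∂S(β)` is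
comparable, with absolute constants, to `d_{T²}(α ∧ β)`. -/
theorem dT2_almost_martingale :
    ∃ c C : ℝ≥0, 0 < c ∧ 0 < C ∧
      ∀ M₀ : Measure Bd, IsProbabilityMeasure M₀ →
        (∀ β : V, M₀ (cylB β) = (2 : ℝ≥0∞) ^ (-(β.length : ℤ))) →
        ∀ α β : V2,
          (c : ℝ≥0∞) * dVV2 α β ≤
            ((M₀.prod M₀) (cylB2 α) * (M₀.prod M₀) (cylB2 β))⁻¹ *
              ∫⁻ ξ in cylB2 α, ∫⁻ ω in cylB2 β, dB2 ξ ω ∂(M₀.prod M₀) ∂(M₀.prod M₀) ∧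
          ((M₀.prod M₀) (cylB2 α) * (M₀.prod M₀) (cylB2 β))⁻¹ *
              ∫⁻ ξ in cylB2 α, ∫⁻ ω in cylB2 β, dB2 ξ ω ∂(M₀.prod M₀) ∂(M₀.prod M₀)
            ≤ (C : ℝ≥0∞) * dVV2 α β := by
  refine ⟨1, 4, one_pos, by norm_num, fun M₀ _ hM α β => ?_⟩
  have hμ := measure_cylinder_of_measure_cylB hM
  rw [average_dB2_eq_meanMeet_mul_meanMeet, dVV2, ENNReal.coe_one, one_mul]
  refine ⟨mul_le_mul' (dVV_le_meanMeet hμ _ _) (dVV_le_meanMeet hμ _ _), ?_⟩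
  calc meanMeet M₀ α.1 β.1 * meanMeet M₀ α.2 β.2
      ≤ 2 * dVV α.1 β.1 * (2 * dVV α.2 β.2) :=
        mul_le_mul' (meanMeet_le_two_mul_dVV hμ _ _) (meanMeet_le_two_mul_dVV hμ _ _)
    _ = 4 * (dVV α.1 β.1 * dVV α.2 β.2) := by ring

end
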